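/- Let φ be the character of A = {k ∈ ℤ^n : Σ k_i = 0} given by φ(k) = Π ω^{j k_j} for ω a primitive n-th root of unity, regarded as a character of A invariant under the full symmetric group action restricted to the n-cycle. The stabilizer of φ in S_n (acting on characters of A by permuting coordinates) is exactly the cyclic subgroup of order n generated by the cycle (1 2 … n). -/

import Mathlib

/-!
Reindexing by `σ` turns `k ↦ ∏ ω ^ ((i + 1) k (σ i))` into the character with weights
`i ↦ σ⁻¹ i + 1`. Two characters `k ↦ ω ^ ∑ cᵢ kᵢ` agree on the sum-zero lattice iff their weights
differ by a constant modulo `n`, because the lattice is spanned by the vectors `eᵢ - eⱼ`.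
Hence `σ` fixes `φ` iff `σ⁻¹` is a translation `i ↦ i + a` of `ℤ/n`, i.e. a power of the rotation.
-/

open Finset

theorem Finset.prod_zpow_eq_zpow_sum₀ {ι G₀ : Type*} [CommGroupWithZero G₀] {a : G₀}
    (ha : a ≠ 0) (s : Finset ι) (f : ι → ℤ) : ∏ i ∈ s, a ^ f i = a ^ ∑ i ∈ s, f i := by
  induction s using Finset.cons_induction with
  | empty => simp
  | cons j s hj ih => rw [prod_cons, sum_cons, ih, zpow_add₀ ha]

theorem forall_sum_zsmul_eq_zero_iff_exists_const {ι M : Type*} [Fintype ι] [AddCommGroup M]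
    (c : ι → M) : (∀ k : ι → ℤ, ∑ i, k i = 0 → ∑ i, k i • c i = 0) ↔ ∃ a, ∀ i, c i = a := by
  classical
  constructor
  · intro h
    rcases isEmpty_or_nonempty ι with hι | ⟨⟨i₀⟩⟩
    · exact ⟨0, isEmptyElim⟩
    refine ⟨c i₀, fun i => sub_eq_zero.mp ?_⟩
    have h_single := h (Pi.single i 1 - Pi.single i₀ 1) (by simp)
    simpa only [Pi.sub_apply, sub_smul, sum_sub_distrib, Pi.single_apply, ite_smul, one_smul,
      zero_smul, sum_ite_eq', mem_univ, if_true] using h_single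
  · rintro ⟨a, ha⟩ k hk
    simp only [ha, ← sum_smul, hk, zero_smul]

namespace IsPrimitiveRoot

variable {G₀ : Type*} [CommGroupWithZero G₀] {ω : G₀} {n : ℕ} [NeZero n]

theorem zpow_eq_zpow_iff (hω : IsPrimitiveRoot ω n) (x y : ℤ) :
    ω ^ x = ω ^ y ↔ (x : ZMod n) = y := by
  have hω0 := hω.ne_zero (NeZero.ne n)
  rw [← div_eq_one_iff_eq (zpow_ne_zero _ hω0), ← zpow_sub₀ hω0, hω.zpow_eq_one_iff_dvd,
    ZMod.intCast_eq_intCast_iff_dvd_sub, ← dvd_neg, neg_sub]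

theorem prod_zpow_mul_comp_perm_eq_iff {ι : Type*} [Fintype ι] (hω : IsPrimitiveRoot ω n)
    (w : ι → ℤ) (σ : Equiv.Perm ι) :
    (∀ k : ι → ℤ, ∑ i, k i = 0 → ∏ i, ω ^ (w i * k (σ i)) = ∏ i, ω ^ (w i * k i)) ↔
      ∃ a : ZMod n, ∀ i, (w (σ⁻¹ i) : ZMod n) = w i + a := by
  have hω0 := hω.ne_zero (NeZero.ne n)
  have h_reindex (k : ι → ℤ) : ∏ i, ω ^ (w i * k (σ i)) = ∏ i, ω ^ (w i * k i) ↔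
      ∑ i, k i • ((w (σ⁻¹ i) : ZMod n) - w i) = 0 := by
    rw [← Equiv.prod_comp σ⁻¹, prod_zpow_eq_zpow_sum₀ hω0, prod_zpow_eq_zpow_sum₀ hω0,
      hω.zpow_eq_zpow_iff, ← sub_eq_zero]
    simp [mul_sub, mul_comm]
  simp_rw [h_reindex, forall_sum_zsmul_eq_zero_iff_exists_const, sub_eq_iff_eq_add']

end IsPrimitiveRoot

theorem natCast_finRotate_pow_apply {n : ℕ} (m : ℕ) (i : Fin n) :
    (((finRotate n ^ m) i : ℕ) : ZMod n) = (i : ℕ) + m := by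
  induction m with
  | zero => simp
  | succ m ih =>
    rw [pow_succ', Equiv.Perm.mul_apply, finRotate_apply, Fin.val_add, ZMod.natCast_mod,
      Nat.cast_add, ih]
    simp [add_assoc]

theorem mem_zpowers_finRotate_iff {n : ℕ} [NeZero n] (σ : Equiv.Perm (Fin n)) :
    σ ∈ Subgroup.zpowers (finRotate n) ↔ ∃ a : ZMod n, ∀ i, ((σ i : ℕ) : ZMod n) = (i : ℕ) + a := by
  rw [← mem_powers_iff_mem_zpowers, Submonoid.mem_powers_iff]
  constructor
  · rintro ⟨m, rfl⟩
    exact ⟨m, natCast_finRotate_pow_apply m⟩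
  · rintro ⟨a, ha⟩
    refine ⟨a.val, Equiv.ext fun i => Fin.ext ?_⟩
    have h := ha i
    rw [← ZMod.natCast_zmod_val a, ← natCast_finRotate_pow_apply] at h
    simpa [ZMod.val_natCast_of_lt (Fin.is_lt _)] using congrArg ZMod.val h.symm

/-- the stabilizer in `S_n` (acting on characters of
`A = {k ∈ ℤ^n : ∑ k_i = 0}` by permuting coordinates) of the character
`φ(k) = ∏_j ω^{j·k_j}` (`ω` a primitive `n`-th root of unity) is exactly the
cyclic subgroup of order `n` generated by the cycle `(1 2 … n)`. -/
theorem stmt_9 (n : ℕ) (ω : ℂ) (hω : IsPrimitiveRoot ω n) (σ : Equiv.Perm (Fin n)) :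
    (∀ k : Fin n → ℤ, ∑ i, k i = 0 →
        ∏ i : Fin n, ω ^ ((((i : ℕ) : ℤ) + 1) * k (σ i)) =
          ∏ i : Fin n, ω ^ ((((i : ℕ) : ℤ) + 1) * k i)) ↔
      σ ∈ Subgroup.zpowers (finRotate n) := by
  obtain rfl | hn := eq_or_ne n 0
  · exact iff_of_true (fun _ _ => by simp) (Subsingleton.elim σ 1 ▸ one_mem _)
  have : NeZero n := ⟨hn⟩
  rw [hω.prod_zpow_mul_comp_perm_eq_iff (fun i : Fin n => ((i : ℕ) : ℤ) + 1), ← inv_mem_iff,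
    mem_zpowers_finRotate_iff]
  push_cast
  simp only [add_right_comm _ (1 : ZMod n), add_left_inj]
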